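/- Let n ≥ 2 and let z : Fin n → ℂ be admissible with Δ(z) = Δmax(n) (a maximizer). Then for every index i, the point z i is an extreme point (over ℝ) of the convex hull (over ℝ) of the set of points {z j : j ∈ Fin n}, viewing ℂ as a real vector space. -/

import Mathlib

/-- The product over all ordered pairs `(i,j)` with `i ≠ j` of `dist (z i) (z j)`. -/
noncomputable def Delta (n : ℕ) (z : Fin n → ℂ) : ℝ :=
  ∏ p ∈ Finset.univ.filter (fun p : Fin n × Fin n => p.1 ≠ p.2), dist (z p.1) (z p.2)

/-- `z` is admissible if all pairwise distances are at most 2. -/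
def Admissible (n : ℕ) (z : Fin n → ℂ) : Prop :=
  ∀ i j, dist (z i) (z j) ≤ 2

/-- The maximal discriminant over admissible configurations. -/
noncomputable def Dmax (n : ℕ) : ℝ :=
  sSup {d : ℝ | ∃ z : Fin n → ℂ, Admissible n z ∧ Delta n z = d}

/-!
If some `z j` lies at distance exactly `2` from `z i`, then all points lie in the closed disc of
radius `2` about `z j` with `z i` on its boundary circle, and strict convexity of the disc makes
`z i` extreme. Otherwise `z i` can be moved freely in a small disc without losing admissibility.
Since `Δ(z) = |p(z i)|² · R` with `p = ∏_{b ≠ i} (X - z b)` and `R > 0` independent of `z i`,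
maximality makes `|p|` locally maximal at `z i`. By the maximum modulus principle and the
identity theorem `p` would then be constant, yet it vanishes at the other points and not at `z i`.
-/

open Finset Filter Metric Topology

theorem mem_extremePoints_convexHull_of_dist_eq {E : Type*} [NormedAddCommGroup E]
    [NormedSpace ℝ E] [StrictConvexSpace ℝ E] [Nontrivial E] {s : Set E} {x c : E} {r : ℝ}
    (hs : s ⊆ closedBall c r) (hx : x ∈ s) (hxc : dist x c = r) :
    x ∈ (convexHull ℝ s).extremePoints ℝ :=
  inter_extremePoints_subset_extremePoints_of_subset (convexHull_min hs (convex_closedBall c r))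
    ⟨subset_convexHull ℝ s hx, by
      rwa [StrictConvexSpace.extremePoints_closedBall_eq_sphere, mem_sphere]⟩

theorem not_isLocalMax_norm_prod_sub {ι : Type*} {s : Finset ι} (hs : s.Nonempty) (c : ι → ℂ)
    {x : ℂ} (hx : ∀ b ∈ s, x ≠ c b) : ¬IsLocalMax (fun w => ‖∏ b ∈ s, (w - c b)‖) x := by
  intro hmax
  set f : ℂ → ℂ := fun w => ∏ b ∈ s, (w - c b)
  have hf : Differentiable ℂ f := by fun_prop
  have hlocal : f =ᶠ[𝓝 x] fun _ => f x :=
    Complex.eventually_eq_of_isLocalMax_norm (.of_forall hf) hmax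
  have hconst : f = fun _ => f x :=
    AnalyticOnNhd.eq_of_eventuallyEq (fun w _ => hf.analyticAt w) analyticOnNhd_const hlocal
  obtain ⟨b, hb⟩ := hs
  have hroot : f (c b) = 0 := prod_eq_zero hb (sub_self _)
  have hfx : f x ≠ 0 := prod_ne_zero_iff.2 fun b hb => sub_ne_zero.2 (hx b hb)
  exact hfx (congrFun hconst (c b) ▸ hroot)

section Discriminant

variable {n : ℕ}

theorem Delta_pos_iff {z : Fin n → ℂ} : 0 < Delta n z ↔ Function.Injective z := by
  constructor
  · intro hpos a b hab
    by_contra hne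
    exact hpos.ne' (prod_eq_zero (mem_filter.2 ⟨mem_univ (a, b), hne⟩) (dist_eq_zero.2 hab))
  · exact fun hz => prod_pos fun p hp => dist_pos.2 (hz.ne (mem_filter.1 hp).2)

theorem Delta_eq_prod_erase (z : Fin n → ℂ) :
    Delta n z = ∏ a, ∏ b ∈ univ.erase a, dist (z a) (z b) := by
  rw [Delta, prod_filter, Fintype.prod_prod_type]
  refine prod_congr rfl fun a _ => ?_
  rw [← prod_filter, filter_ne]

theorem Delta_eq_sq_mul (z : Fin n → ℂ) (i : Fin n) :
    Delta n z = (∏ b ∈ univ.erase i, dist (z i) (z b)) ^ 2 *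
      ∏ a ∈ univ.erase i, ∏ b ∈ (univ.erase i).erase a, dist (z a) (z b) := by
  have hsplit : ∀ a ∈ univ.erase i, ∏ b ∈ univ.erase a, dist (z a) (z b) =
      dist (z i) (z a) * ∏ b ∈ (univ.erase i).erase a, dist (z a) (z b) := by
    intro a ha
    rw [erase_right_comm, ← mul_prod_erase _ _ (mem_erase.2 ⟨ne_of_mem_erase ha |>.symm,
      mem_univ i⟩), dist_comm]
  rw [Delta_eq_prod_erase, ← mul_prod_erase _ _ (mem_univ i), prod_congr rfl hsplit,
    prod_mul_distrib]
  ring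

theorem bddAbove_Delta : BddAbove {d : ℝ | ∃ z : Fin n → ℂ, Admissible n z ∧ Delta n z = d} := by
  refine ⟨2 ^ (univ.filter fun p : Fin n × Fin n => p.1 ≠ p.2).card, ?_⟩
  rintro d ⟨z, hz, rfl⟩
  rw [← prod_const]
  exact prod_le_prod (fun _ _ => dist_nonneg) fun p _ => hz p.1 p.2

theorem Delta_le_Dmax {z : Fin n → ℂ} (hz : Admissible n z) : Delta n z ≤ Dmax n :=
  le_csSup bddAbove_Delta ⟨z, hz, rfl⟩

theorem Dmax_pos (n : ℕ) : 0 < Dmax n := by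
  set z : Fin n → ℂ := fun k => ((k / n : ℝ) : ℂ)
  have hmem : ∀ k : Fin n, (k / n : ℝ) ∈ Set.Icc 0 1 := fun k =>
    ⟨by positivity, div_le_one_of_le₀ (by exact_mod_cast k.2.le) (Nat.cast_nonneg n)⟩
  have hz : Function.Injective z := by
    intro a b hab
    have hn : (n : ℝ) ≠ 0 := by exact_mod_cast (Fin.pos a).ne'
    have : (a / n : ℝ) = b / n := Complex.ofReal_injective hab
    exact Fin.ext (by exact_mod_cast (div_left_inj' hn).1 this)
  have hadm : Admissible n z := fun a b => by
    rw [Complex.isometry_ofReal.dist_eq]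
    linarith [Real.dist_le_of_mem_Icc_01 (hmem a) (hmem b)]
  exact (Delta_pos_iff.2 hz).trans_le (Delta_le_Dmax hadm)

theorem Admissible.update {z : Fin n → ℂ} (hz : Admissible n z) {i : Fin n} {w : ℂ}
    (hw : ∀ j ≠ i, dist w (z j) ≤ 2) : Admissible n (Function.update z i w) := by
  intro a b
  rcases eq_or_ne a i with ha | ha <;> rcases eq_or_ne b i with hb | hb
  · simp [ha, hb]
  · simpa [ha, hb] using hw b hb
  · simpa [ha, hb, dist_comm] using hw a ha
  · simpa [ha, hb] using hz a b

variable {z : Fin n → ℂ}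

theorem prod_dist_le_of_Delta_eq_Dmax (hadm : Admissible n z) (hmax : Delta n z = Dmax n)
    {i : Fin n} {w : ℂ} (hw : ∀ j ≠ i, dist w (z j) ≤ 2) :
    ∏ b ∈ univ.erase i, dist w (z b) ≤ ∏ b ∈ univ.erase i, dist (z i) (z b) := by
  set z' := Function.update z i w
  have hle : Delta n z' ≤ Delta n z := hmax ▸ Delta_le_Dmax (hadm.update hw)
  have hz'i : z' i = w := Function.update_self i w z
  have hz' : ∀ j ∈ univ.erase i, z' j = z j := fun j hj =>
    Function.update_of_ne (ne_of_mem_erase hj) _ _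
  have hrest : ∏ a ∈ univ.erase i, ∏ b ∈ (univ.erase i).erase a, dist (z' a) (z' b) =
      ∏ a ∈ univ.erase i, ∏ b ∈ (univ.erase i).erase a, dist (z a) (z b) :=
    prod_congr rfl fun a ha => prod_congr rfl fun b hb => by
      rw [hz' a ha, hz' b (mem_of_mem_erase hb)]
  have hnear : ∏ b ∈ univ.erase i, dist (z' i) (z' b) = ∏ b ∈ univ.erase i, dist w (z b) :=
    prod_congr rfl fun b hb => by rw [hz' b hb, hz'i]
  rw [Delta_eq_sq_mul z' i, Delta_eq_sq_mul z i, hrest, hnear] at hle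
  have hrest_pos := pos_of_mul_pos_right (Delta_eq_sq_mul z i ▸ hmax ▸ Dmax_pos n)
    (sq_nonneg _)
  exact (pow_le_pow_iff_left₀ (prod_nonneg fun _ _ => dist_nonneg)
    (prod_nonneg fun _ _ => dist_nonneg) two_ne_zero).1 (le_of_mul_le_mul_right hle hrest_pos)

theorem exists_dist_eq_two_of_Delta_eq_Dmax (hn : 2 ≤ n) (hadm : Admissible n z)
    (hmax : Delta n z = Dmax n) (i : Fin n) : ∃ j ≠ i, dist (z i) (z j) = 2 := by
  by_contra! hlt
  have hnear : ∀ᶠ w in 𝓝 (z i), ∀ j ∈ univ.erase i, w ∈ ball (z j) 2 :=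
    (eventually_all_finset _).2 fun j hj => isOpen_ball.mem_nhds <|
      (hadm i j).lt_of_ne (hlt j (ne_of_mem_erase hj))
  have hlocal : IsLocalMax (fun w => ‖∏ b ∈ univ.erase i, (w - z b)‖) (z i) :=
    hnear.mono fun w hw => by
      simp only [norm_prod, ← dist_eq_norm]
      exact prod_dist_le_of_Delta_eq_Dmax hadm hmax fun j hj =>
        (hw j (mem_erase.2 ⟨hj, mem_univ j⟩)).le
  have hothers : (univ.erase i).Nonempty := by
    rw [← card_pos, card_erase_of_mem (mem_univ i), card_univ, Fintype.card_fin]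
    omega
  have hz : Function.Injective z := Delta_pos_iff.1 (hmax ▸ Dmax_pos n)
  exact not_isLocalMax_norm_prod_sub hothers z
    (fun b hb => hz.ne (ne_of_mem_erase hb).symm) hlocal

end Discriminant

theorem stmt4 (n : ℕ) (hn : 2 ≤ n) (z : Fin n → ℂ)
    (hadm : Admissible n z) (hmax : Delta n z = Dmax n) :
    ∀ i : Fin n, z i ∈ Set.extremePoints ℝ (convexHull ℝ (Set.range z)) := by
  intro i
  obtain ⟨j, -, hij⟩ := exists_dist_eq_two_of_Delta_eq_Dmax hn hadm hmax i
  refine mem_extremePoints_convexHull_of_dist_eq ?_ (Set.mem_range_self i) hij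
  rintro _ ⟨k, rfl⟩
  exact mem_closedBall.2 (hadm k j)
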